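/- arXiv:math/9804067 — 5 statements merged into one kernel-verified Lean document; each statement's English description precedes it below -/
import Mathlib

section
/- Let X be the completion of c00 under a 1-unconditional norm ‖·‖, and suppose there is a constant C > 0 such that for every S_1-allowable family of vectors x_1, …, x_n in c00 (pairwise disjoint supports with (min supp x_i)_i ∈ S_1), one has C·Σ_i ‖x_i‖ ≤ ‖Σ_i x_i‖. Then in the 2-convexification X^{(2)}, for every S_1-allowable family y_1, …, y_n, one has C^{1/2}·(Σ_i ‖y_i‖_{(2)}²)^{1/2} ≤ ‖Σ_i y_i‖_{(2)} ≤ (Σ_i ‖y_i‖_{(2)}²)^{1/2}. -/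
/-- The Schreier classes `S_n` of finite subsets of `ℕ`:
`S_0` consists of singletons and the empty set, and `F ∈ S_{n+1}` iff
`F = F_1 ∪ ⋯ ∪ F_k` where `k ≤ F_1 < F_2 < ⋯ < F_k` and each `F_i ∈ S_n`
(the empty set is allowed in every class). -/
inductive Schreier : ℕ → Finset ℕ → Prop
  | empty (n : ℕ) : Schreier n ∅
  | singleton (m : ℕ) : Schreier 0 {m}
  | union (n : ℕ) (L : List (Finset ℕ))
      (hmem : ∀ F ∈ L, Schreier n F)
      (hchain : L.Chain' (fun E F => ∀ a ∈ E, ∀ b ∈ F, a < b))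
      (hlen : ∀ F ∈ L, ∀ a ∈ F, L.length ≤ a) :
      Schreier (n + 1) (L.foldr (· ∪ ·) ∅)

/-- A family of finitely supported vectors is `S_k`-allowable: the supports are
nonempty and pairwise disjoint, and the set of minima of the supports is in `S_k`. -/
def Allowable (k : ℕ) {r : ℕ} (x : Fin r → (ℕ →₀ ℝ)) : Prop :=
  (∀ i, (x i).support.Nonempty) ∧
  (∀ i j, i ≠ j → Disjoint (x i).support (x j).support) ∧
  Schreier k (Finset.image (fun i => ((x i).support.min.getD 0)) Finset.univ)

/-- A family of finite sets is `S_k`-allowable: nonempty, pairwise disjoint,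
with the set of minima in `S_k`. -/
def AllowableSets (k : ℕ) {r : ℕ} (E : Fin r → Finset ℕ) : Prop :=
  (∀ i, (E i).Nonempty) ∧
  (∀ i j, i ≠ j → Disjoint (E i) (E j)) ∧
  Schreier k (Finset.image (fun i => ((E i).min.getD 0)) Finset.univ)

/-- `N` is the sequence of norms `‖·‖_{V,m}` on `c₀₀`:
`N 0 x = ‖x‖_∞` and `N (m+1) x` is the supremum of `‖x‖_∞` together with all
`θ_k · Σ_i ‖E_i x‖_{V,m}` over `k ≥ 1` and `S_k`-allowable families `(E_i)`. -/
def VNormRec (θ : ℕ → ℝ) (N : ℕ → (ℕ →₀ ℝ) → ℝ) : Prop :=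
  (∀ x : ℕ →₀ ℝ, N 0 x = ⨆ j, |x j|) ∧
  (∀ (m : ℕ) (x : ℕ →₀ ℝ),
    IsLUB ({⨆ j, |x j|} ∪
      {y : ℝ | ∃ k, 1 ≤ k ∧ ∃ r, ∃ E : Fin r → Finset ℕ, AllowableSets k E ∧
        y = θ k * ∑ i, N m (x.filter (· ∈ E i))})
      (N (m + 1) x))

/-- Coordinatewise square. -/
noncomputable def fsq (x : ℕ →₀ ℝ) : ℕ →₀ ℝ :=
  Finsupp.mapRange (fun t => t ^ 2) (by norm_num) x

/-!
Squaring coordinates preserves supports and, on disjointly supported vectors, turns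
`‖∑ yᵢ‖_{(2)}²` into `N (∑ yᵢ²)`. The lower estimate is then the asymptotic `ℓ₁` estimate
for the family `(yᵢ²)`, which is again `S₁`-allowable, and the upper one is the triangle
inequality for `N`.
-/

namespace Finsupp

variable {α ι M N : Type*} [AddCommMonoid M] [AddCommMonoid N]

theorem mapRange_finset_sum_of_pairwiseDisjoint {f : M → N} (hf : f 0 = 0) {s : Finset ι}
    {x : ι → α →₀ M} (hx : (s : Set ι).PairwiseDisjoint fun i => (x i).support) :
    mapRange f hf (∑ i ∈ s, x i) = ∑ i ∈ s, mapRange f hf (x i) := by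
  ext j
  simp only [mapRange_apply, finsetSum_apply]
  by_cases h : ∃ i ∈ s, j ∈ (x i).support
  · obtain ⟨i, hi, hj⟩ := h
    have hzero : ∀ k ∈ s, k ≠ i → x k j = 0 := fun k hk hki =>
      notMem_support_iff.1 (Finset.disjoint_right.1 (hx hk hi hki) hj)
    rw [Finset.sum_eq_single_of_mem i hi hzero,
      Finset.sum_eq_single_of_mem i hi fun k hk hki => by rw [hzero k hk hki, hf]]
  · push Not at h
    have hzero : ∀ i ∈ s, x i j = 0 := fun i hi => notMem_support_iff.1 (h i hi)
    rw [Finset.sum_eq_zero hzero, Finset.sum_eq_zero fun i hi => by rw [hzero i hi, hf], hf]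

end Finsupp

@[simp]
theorem fsq_apply (x : ℕ →₀ ℝ) (j : ℕ) : fsq x j = x j ^ 2 :=
  Finsupp.mapRange_apply ..

@[simp]
theorem support_fsq (x : ℕ →₀ ℝ) : (fsq x).support = x.support := by
  ext j
  simp

theorem fsq_finset_sum_of_pairwiseDisjoint {ι : Type*} {s : Finset ι} {x : ι → ℕ →₀ ℝ}
    (hx : (s : Set ι).PairwiseDisjoint fun i => (x i).support) :
    fsq (∑ i ∈ s, x i) = ∑ i ∈ s, fsq (x i) :=
  Finsupp.mapRange_finset_sum_of_pairwiseDisjoint _ hx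

theorem allowable_fsq_iff {k r : ℕ} {x : Fin r → ℕ →₀ ℝ} :
    Allowable k (fun i => fsq (x i)) ↔ Allowable k x := by
  simp only [Allowable, support_fsq]

theorem two_convexification_of_asymptotic_l1_is_asymptotic_l2_general
    (N : (ℕ →₀ ℝ) → ℝ)
    (htri : ∀ x y, N (x + y) ≤ N x + N y)
    (hhom : ∀ (c : ℝ) (x), N (c • x) = |c| * N x)
    (C : ℝ) (hC : 0 < C)
    (hasym : ∀ (n : ℕ) (x : Fin n → (ℕ →₀ ℝ)), Allowable 1 x →
      C * ∑ i, N (x i) ≤ N (∑ i, x i)) :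
    ∀ (n : ℕ) (y : Fin n → (ℕ →₀ ℝ)), Allowable 1 y →
      Real.sqrt C * Real.sqrt (∑ i, Real.sqrt (N (fsq (y i))) ^ 2) ≤
        Real.sqrt (N (fsq (∑ i, y i))) ∧
      Real.sqrt (N (fsq (∑ i, y i))) ≤
        Real.sqrt (∑ i, Real.sqrt (N (fsq (y i))) ^ 2) := by
  intro n y hy
  -- packaging `N` as a seminorm supplies `0 ≤ N x` and `N 0 = 0`
  let p : Seminorm ℝ (ℕ →₀ ℝ) := .of N htri hhom
  have hsq : fsq (∑ i, y i) = ∑ i, fsq (y i) :=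
    fsq_finset_sum_of_pairwiseDisjoint fun i _ j _ hij => hy.2.1 i j hij
  have hsqrt (i : Fin n) : Real.sqrt (N (fsq (y i))) ^ 2 = N (fsq (y i)) :=
    Real.sq_sqrt (apply_nonneg p _)
  simp only [hsqrt, hsq, ← Real.sqrt_mul hC.le]
  exact ⟨Real.sqrt_le_sqrt (hasym n _ (allowable_fsq_iff.2 hy)),
    Real.sqrt_le_sqrt (Finset.le_sum_of_subadditive p (map_zero p).le htri _ _)⟩

theorem two_convexification_of_asymptotic_l1_is_asymptotic_l2
    (N : (ℕ →₀ ℝ) → ℝ)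
    (htri : ∀ x y, N (x + y) ≤ N x + N y)
    (hhom : ∀ (c : ℝ) (x), N (c • x) = |c| * N x)
    (hnonneg : ∀ x, 0 ≤ N x)
    (huncond : ∀ x y : ℕ →₀ ℝ, (∀ j, |x j| ≤ |y j|) → N x ≤ N y)
    (C : ℝ) (hC : 0 < C)
    (hasym : ∀ (n : ℕ) (x : Fin n → (ℕ →₀ ℝ)), Allowable 1 x →
      C * ∑ i, N (x i) ≤ N (∑ i, x i)) :
    ∀ (n : ℕ) (y : Fin n → (ℕ →₀ ℝ)), Allowable 1 y →
      Real.sqrt C * Real.sqrt (∑ i, Real.sqrt (N (fsq (y i))) ^ 2) ≤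
        Real.sqrt (N (fsq (∑ i, y i))) ∧
      Real.sqrt (N (fsq (∑ i, y i))) ≤
        Real.sqrt (∑ i, Real.sqrt (N (fsq (y i))) ^ 2) :=
  two_convexification_of_asymptotic_l1_is_asymptotic_l2_general N htri hhom C hC hasym
end

section
/- Each Schreier class S_n, viewed as a set of indicator sequences in {0,1}^ℕ, is closed in the product (pointwise) topology. -/
/-!
Write `C n` for the set of indicator sequences of members of `S_n`. The zero sequence lies in
`C n`, and near a sequence `f` with `f m = true` the set `C n` is trapped inside a closed subset
of itself: for `n = 0` the single point `1_{m}`, and for `n + 1` the finite union over `k ≤ m`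
of the sets of pointwise maxima of `k` admissible blocks from `C n`, since a member of `S_{n+1}`
containing `m` has at most `m` blocks. Each such set is the continuous image of a closed, hence
compact, subset of `(ℕ → Bool)^k`, and that subset is closed because `C n` is.
-/

open Set

theorem List.mem_foldr_union {α : Type*} [DecidableEq α] {L : List (Finset α)} {a : α} :
    a ∈ L.foldr (· ∪ ·) ∅ ↔ ∃ F ∈ L, a ∈ F := by
  induction L with
  | nil => simp
  | cons F L ih => simp [ih]

def indicatorSet (𝓕 : Finset ℕ → Prop) : Set (ℕ → Bool) :=
  {f | ∃ F, 𝓕 F ∧ ∀ j, f j = decide (j ∈ F)}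

theorem isClosed_of_forall_inter_subset_isClosed {ι : Type*} {C : Set (ι → Bool)}
    (h0 : (fun _ => false) ∈ C)
    (hloc : ∀ i, ∃ D, IsClosed D ∧ D ⊆ C ∧ {f | f i = true} ∩ C ⊆ D) : IsClosed C := by
  refine isClosed_of_closure_subset fun f hf => ?_
  by_cases hf0 : ∃ i, f i = true
  · obtain ⟨i, hi⟩ := hf0
    obtain ⟨D, hD, hDC, hCD⟩ := hloc i
    have hU : IsOpen ((fun g : ι → Bool => g i) ⁻¹' {true}) :=
      (isOpen_discrete _).preimage (continuous_apply i)
    exact hDC (closure_minimal hCD hD (hU.inter_closure ⟨hi, hf⟩))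
  · obtain rfl : f = fun _ => false := funext fun i => by simpa using fun h => hf0 ⟨i, h⟩
    exact h0

def unionMap (k : ℕ) (g : Fin k → ℕ → Bool) : ℕ → Bool :=
  fun j => decide (∃ t, g t j = true)

theorem continuous_unionMap (k : ℕ) : Continuous (unionMap k) :=
  continuous_pi fun j => (continuous_of_discreteTopology
    (f := fun b : Fin k → Bool => decide (∃ t, b t = true))).comp (by fun_prop)

def blockSet (C : Set (ℕ → Bool)) (k : ℕ) : Set (Fin k → ℕ → Bool) :=
  {g | (∀ t, g t ∈ C) ∧
    (∀ i (hi : i + 1 < k) a b,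
      g ⟨i, Nat.lt_of_succ_lt hi⟩ a = true → g ⟨i + 1, hi⟩ b = true → a < b) ∧
    ∀ t a, g t a = true → k ≤ a}

theorem isClosed_blockSet {C : Set (ℕ → Bool)} (hC : IsClosed C) (k : ℕ) :
    IsClosed (blockSet C k) := by
  have hB : ∀ (x y : Fin k) (a b : ℕ) (p : Bool → Bool → Prop),
      IsClosed {g : Fin k → ℕ → Bool | p (g x a) (g y b)} := fun x y a b p =>
    (isClosed_discrete {q : Bool × Bool | p q.1 q.2}).preimage
      (f := fun g : Fin k → ℕ → Bool => (g x a, g y b)) (by fun_prop)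
  simp only [blockSet, ofPred_and, ofPred_forall]
  refine IsClosed.inter ?_ (IsClosed.inter ?_ ?_)
  · exact isClosed_iInter fun t => hC.preimage (continuous_apply t)
  · exact isClosed_iInter fun i => isClosed_iInter fun hi => isClosed_iInter fun a =>
      isClosed_iInter fun b => hB _ _ a b fun u v => u = true → v = true → a < b
  · exact isClosed_iInter fun t => isClosed_iInter fun a =>
      hB t t a a fun u _ => u = true → k ≤ a

theorem isClosed_image_unionMap_blockSet {C : Set (ℕ → Bool)} (hC : IsClosed C) (k : ℕ) :
    IsClosed (unionMap k '' blockSet C k) :=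
  ((isClosed_blockSet hC k).isCompact.image (continuous_unionMap k)).isClosed

theorem schreier_succ_iff {n : ℕ} {F : Finset ℕ} :
    Schreier (n + 1) F ↔ ∃ k, ∃ G : Fin k → Finset ℕ, (∀ t, Schreier n (G t)) ∧
      (∀ i (hi : i + 1 < k), ∀ a ∈ G ⟨i, Nat.lt_of_succ_lt hi⟩, ∀ b ∈ G ⟨i + 1, hi⟩, a < b) ∧
      (∀ t, ∀ a ∈ G t, k ≤ a) ∧ F = Finset.univ.biUnion G := by
  constructor
  · rintro (_ | _ | ⟨_, L, hmem, hchain, hlen⟩)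
    · exact ⟨0, Fin.elim0, nofun, fun i hi => by omega, nofun, by simp⟩
    · refine ⟨L.length, fun t => L[t], fun t => hmem _ (List.getElem_mem _),
        List.isChain_iff_getElem.mp hchain, fun t => hlen _ (List.getElem_mem _), ?_⟩
      ext a
      simp [List.mem_foldr_union, List.mem_iff_getElem, Fin.exists_iff]
  · rintro ⟨k, G, hmem, hchain, hlen, rfl⟩
    have h := Schreier.union n (List.ofFn G) (by simpa [List.mem_ofFn'] using hmem)
      (List.isChain_ofFn.mpr hchain) (by simpa [List.mem_ofFn'] using hlen)
    convert h using 1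
    ext a
    simp [List.mem_foldr_union, List.mem_ofFn']

theorem isClosed_indicatorSet_schreier_zero : IsClosed (indicatorSet (Schreier 0)) := by
  refine isClosed_of_forall_inter_subset_isClosed ⟨∅, .empty 0, by simp⟩ fun m =>
    ⟨{fun j => decide (j = m)}, isClosed_singleton, ?_, ?_⟩
  · rintro _ rfl
    exact ⟨{m}, .singleton m, by simp⟩
  · rintro f ⟨hfm, F, hF, hf⟩
    cases hF with
    | empty => simp [hf] at hfm
    | singleton a =>
      obtain rfl : m = a := by simpa [hf] using hfm
      funext j
      simp [hf]

theorem image_unionMap_blockSet_subset (n k : ℕ) :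
    unionMap k '' blockSet (indicatorSet (Schreier n)) k ⊆ indicatorSet (Schreier (n + 1)) := by
  rintro _ ⟨g, ⟨hmem, hchain, hlen⟩, rfl⟩
  choose G hG hgG using hmem
  refine ⟨Finset.univ.biUnion G, schreier_succ_iff.mpr ⟨k, G, hG, ?_, ?_, rfl⟩, ?_⟩
  · intro i hi a ha b hb
    exact hchain i hi a b (by simpa [hgG] using ha) (by simpa [hgG] using hb)
  · intro t a ha
    exact hlen t a (by simpa [hgG] using ha)
  · intro j
    simp [unionMap, hgG]

theorem inter_indicatorSet_schreier_succ_subset (n m : ℕ) :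
    {f | f m = true} ∩ indicatorSet (Schreier (n + 1)) ⊆
      ⋃ k ∈ Iic m, unionMap k '' blockSet (indicatorSet (Schreier n)) k := by
  rintro f ⟨hfm, F, hF, hf⟩
  obtain ⟨k, G, hG, hchain, hlen, rfl⟩ := schreier_succ_iff.mp hF
  obtain ⟨t, hmt⟩ : ∃ t, m ∈ G t := by simpa [hf] using hfm
  refine mem_biUnion (x := k) (hlen t m hmt) ⟨fun t j => decide (j ∈ G t), ⟨?_, ?_, ?_⟩, ?_⟩
  · exact fun t => ⟨G t, hG t, fun j => rfl⟩
  · intro i hi a b ha hb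
    exact hchain i hi a (by simpa using ha) b (by simpa using hb)
  · intro t a ha
    exact hlen t a (by simpa using ha)
  · funext j
    simp [unionMap, hf]

theorem isClosed_indicatorSet_schreier_succ {n : ℕ} (h : IsClosed (indicatorSet (Schreier n))) :
    IsClosed (indicatorSet (Schreier (n + 1))) :=
  isClosed_of_forall_inter_subset_isClosed ⟨∅, .empty _, by simp⟩ fun m =>
    ⟨_, (finite_Iic m).isClosed_biUnion fun k _ => isClosed_image_unionMap_blockSet h k,
      iUnion₂_subset fun k _ => image_unionMap_blockSet_subset n k,
      inter_indicatorSet_schreier_succ_subset n m⟩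

/-- Each Schreier class, viewed as a set of indicator sequences in
`{0,1}^ℕ` with the product topology, is closed. -/
theorem schreier_isClosed (n : ℕ) :
    IsClosed {f : ℕ → Bool | ∃ F : Finset ℕ, Schreier n F ∧
      ∀ j, f j = decide (j ∈ F)} := by
  induction n with
  | zero => exact isClosed_indicatorSet_schreier_zero
  | succ n ih => exact isClosed_indicatorSet_schreier_succ ih
end

section
/- Let (α_m) be positive reals with Σ_m α_m = 1 and α_{m+1}/α_m ≥ u > 0 for all m, let (θ_n) ⊂ (0,1), and let ‖·‖_{V,m} and ‖·‖_{V'} = Σ_m α_m ‖·‖_{V,m} be as defined. Then for every n ∈ ℕ and every family x_1, …, x_n ∈ c00 of pairwise disjointly supported vectors with n ≤ min supp x_i for all i, one has ‖Σ_{i=1}^n x_i‖_{V'} ≥ θ_1·u·Σ_{i=1}^n ‖x_i‖_{V'}. -/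
/-!
For `n` disjointly supported vectors living on `[n, ∞)`, their supports form an `S_1`-allowable
family, so the recursion for `‖·‖_{V,m+1}` gives `‖Σ xᵢ‖_{V,m+1} ≥ θ_1 Σ ‖xᵢ‖_{V,m}`. Weighting by
`α_{m+1} ≥ u α_m` and summing over `m` compares the `V'`-norm of the sum with the index-shifted
series for the pieces; the missing first term is nonnegative. Every series converges because
`‖x‖_{V,m} ≤ ‖x‖_1` when all `θ_k ≤ 1`.
-/

open Finset

theorem Schreier.one_of_forall_card_le {F : Finset ℕ} (h : ∀ a ∈ F, #F ≤ a) : Schreier 1 F := by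
  have hunion := Schreier.union 0 ((F.sort (· ≤ ·)).map ({·}))
    (by
      simp only [List.mem_map]
      rintro _ ⟨a, -, rfl⟩
      exact Schreier.singleton a)
    (by
      show List.IsChain _ _
      rw [List.isChain_map]
      refine (sortedLT_sort F).isChain.imp fun a b hab => ?_
      simpa using hab)
    (by
      simp only [List.mem_map, List.length_map, length_sort]
      rintro _ ⟨b, hb, rfl⟩ a ha
      rw [mem_singleton] at ha
      subst ha
      exact h a ((mem_sort _).mp hb))
  have hfoldr : ∀ l : List ℕ, (l.map ({·})).foldr (· ∪ ·) (∅ : Finset ℕ) = l.toFinset := by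
    intro l
    induction l with
    | nil => rfl
    | cons a l ih => simp [ih]
  rwa [hfoldr, sort_toFinset] at hunion

theorem allowableSets_one_support {n : ℕ} (x : Fin n → ℕ →₀ ℝ)
    (hne : ∀ i, (x i).support.Nonempty)
    (hdisj : ∀ i j, i ≠ j → Disjoint (x i).support (x j).support)
    (hmin : ∀ i, ∀ j ∈ (x i).support, n ≤ j) :
    AllowableSets 1 fun i => (x i).support := by
  refine ⟨hne, hdisj, Schreier.one_of_forall_card_le ?_⟩
  simp only [mem_image, mem_univ, true_and]
  rintro _ ⟨i, rfl⟩
  obtain ⟨b, hb⟩ := min_of_nonempty (hne i)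
  rw [hb]
  calc #(univ.image fun i => (x i).support.min.getD 0) ≤ #(univ : Finset (Fin n)) := card_image_le
    _ = n := card_fin n
    _ ≤ b := hmin i b (mem_of_min hb)

theorem Finsupp.filter_mem_support_sum_of_pairwise_disjoint {ι α : Type*} [Fintype ι] [DecidableEq α]
    (x : ι → α →₀ ℝ) (hdisj : ∀ i j, i ≠ j → Disjoint (x i).support (x j).support) (i : ι) :
    (∑ j, x j).filter (· ∈ (x i).support) = x i := by
  ext a
  rw [Finsupp.filter_apply]
  split_ifs with ha
  · rw [Finsupp.finsetSum_apply]
    refine Finset.sum_eq_single i (fun j _ hji => ?_) fun hi => (hi (mem_univ i)).elim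
    by_contra hne
    exact disjoint_left.mp (hdisj j i hji) (Finsupp.mem_support_iff.mpr hne) ha
  · exact (Finsupp.notMem_support_iff.mp ha).symm

section L1Norm

variable {ι : Type*}

def l1Norm (x : ι →₀ ℝ) : ℝ := ∑ j ∈ x.support, |x j|

theorem l1Norm_nonneg (x : ι →₀ ℝ) : 0 ≤ l1Norm x :=
  sum_nonneg fun _ _ => abs_nonneg _

theorem abs_apply_le_l1Norm (x : ι →₀ ℝ) (j : ι) : |x j| ≤ l1Norm x := by
  by_cases hj : j ∈ x.support
  · exact single_le_sum (f := fun j => |x j|) (fun _ _ => abs_nonneg _) hj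
  · simpa [Finsupp.notMem_support_iff.mp hj] using l1Norm_nonneg x

theorem bddAbove_range_abs_apply (x : ι →₀ ℝ) : BddAbove (Set.range fun j => |x j|) :=
  ⟨l1Norm x, by rintro _ ⟨j, rfl⟩; exact abs_apply_le_l1Norm x j⟩

theorem iSup_abs_apply_nonneg [Nonempty ι] (x : ι →₀ ℝ) : 0 ≤ ⨆ j, |x j| :=
  (abs_nonneg _).trans (le_ciSup (bddAbove_range_abs_apply x) (Classical.arbitrary ι))

theorem iSup_abs_apply_le_l1Norm [Nonempty ι] (x : ι →₀ ℝ) : ⨆ j, |x j| ≤ l1Norm x :=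
  ciSup_le (abs_apply_le_l1Norm x)

theorem sum_l1Norm_filter_le [DecidableEq ι] {r : ℕ} (E : Fin r → Finset ι)
    (hdisj : ∀ i j, i ≠ j → Disjoint (E i) (E j)) (x : ι →₀ ℝ) :
    ∑ i, l1Norm (x.filter (· ∈ E i)) ≤ l1Norm x := by
  have hfilter : ∀ i, l1Norm (x.filter (· ∈ E i)) = ∑ j ∈ x.support.filter (· ∈ E i), |x j| := by
    intro i
    rw [l1Norm, Finsupp.support_filter]
    exact sum_congr rfl fun j hj => by rw [Finsupp.filter_apply_pos _ _ (mem_filter.mp hj).2]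
  have hpairwise : ((univ : Finset (Fin r)) : Set (Fin r)).PairwiseDisjoint
      fun i => x.support.filter (· ∈ E i) := fun i _ j _ hij =>
    disjoint_filter_filter' _ _ (by
      intro p hpi hpj a ha
      exact disjoint_left.mp (hdisj i j hij) (hpi a ha) (hpj a ha))
  simp only [hfilter]
  rw [← sum_biUnion hpairwise]
  refine sum_le_sum_of_subset_of_nonneg (fun j hj => ?_) fun _ _ _ => abs_nonneg _
  obtain ⟨i, -, hj⟩ := mem_biUnion.mp hj
  exact (mem_filter.mp hj).1

end L1Norm

namespace VNormRec

variable {θ : ℕ → ℝ} {N : ℕ → (ℕ →₀ ℝ) → ℝ}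

theorem nonneg (hrec : VNormRec θ N) (m : ℕ) (x : ℕ →₀ ℝ) : 0 ≤ N m x := by
  cases m with
  | zero => exact hrec.1 x ▸ iSup_abs_apply_nonneg x
  | succ m => exact (iSup_abs_apply_nonneg x).trans ((hrec.2 m x).1 (Or.inl rfl))

theorem le_l1Norm (hθ : ∀ k, θ k ≤ 1) (hrec : VNormRec θ N) (m : ℕ) (x : ℕ →₀ ℝ) :
    N m x ≤ l1Norm x := by
  induction m generalizing x with
  | zero => exact hrec.1 x ▸ iSup_abs_apply_le_l1Norm x
  | succ m ih =>
    refine (hrec.2 m x).2 ?_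
    rintro y (rfl | ⟨k, -, r, E, hE, rfl⟩)
    · exact iSup_abs_apply_le_l1Norm x
    · calc θ k * ∑ i, N m (x.filter (· ∈ E i))
          ≤ ∑ i, N m (x.filter (· ∈ E i)) :=
            mul_le_of_le_one_left (sum_nonneg fun _ _ => hrec.nonneg _ _) (hθ k)
        _ ≤ ∑ i, l1Norm (x.filter (· ∈ E i)) := sum_le_sum fun i _ => ih _
        _ ≤ l1Norm x := sum_l1Norm_filter_le E hE.2.1 x

theorem summable_mul (hθ : ∀ k, θ k ≤ 1) (hrec : VNormRec θ N) {β : ℕ → ℝ}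
    (hβ : ∀ m, 0 ≤ β m) (hβs : Summable β) (x : ℕ →₀ ℝ) :
    Summable fun m => β m * N (m + 1) x :=
  hβs.mul_right (l1Norm x) |>.of_nonneg_of_le (fun m => mul_nonneg (hβ m) (hrec.nonneg _ x))
    fun m => mul_le_mul_of_nonneg_left (hrec.le_l1Norm hθ _ x) (hβ m)

theorem theta_one_mul_sum_le (hrec : VNormRec θ N) {n : ℕ} (x : Fin n → ℕ →₀ ℝ)
    (hne : ∀ i, (x i).support.Nonempty)
    (hdisj : ∀ i j, i ≠ j → Disjoint (x i).support (x j).support)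
    (hmin : ∀ i, ∀ j ∈ (x i).support, n ≤ j) (m : ℕ) :
    θ 1 * ∑ i, N m (x i) ≤ N (m + 1) (∑ i, x i) := by
  refine (hrec.2 m _).1 (Or.inr ⟨1, le_rfl, n, _, allowableSets_one_support x hne hdisj hmin, ?_⟩)
  simp only [Finsupp.filter_mem_support_sum_of_pairwise_disjoint x hdisj]

end VNormRec

theorem VPrime_asymptotic_l1_general
    (θ : ℕ → ℝ) (hθ : ∀ n, θ n ∈ Set.Ioo (0:ℝ) 1)
    (N : ℕ → (ℕ →₀ ℝ) → ℝ) (hrec : VNormRec θ N)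
    (α : ℕ → ℝ) (hα : ∀ m, 0 < α m)
    (hsum : ∑' m : ℕ, α (m + 1) = 1)
    (u : ℝ)
    (hratio : ∀ m, 1 ≤ m → u * α m ≤ α (m + 1)) :
    ∀ (n : ℕ) (x : Fin n → (ℕ →₀ ℝ)),
      (∀ i, (x i).support.Nonempty) →
      (∀ i j, i ≠ j → Disjoint (x i).support (x j).support) →
      (∀ i, ∀ j ∈ (x i).support, n ≤ j) →
      θ 1 * u * ∑ i, (∑' m : ℕ, α (m + 1) * N (m + 1) (x i)) ≤
        ∑' m : ℕ, α (m + 1) * N (m + 1) (∑ i, x i) := by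
  intro n x hne hdisj hmin
  have hαs : Summable fun m => α (m + 1) := by
    by_contra h
    simp [tsum_eq_zero_of_not_summable h] at hsum
  have hS := hrec.summable_mul (fun k => (hθ k).2.le) (fun m => (hα _).le) hαs
  have hterm (m : ℕ) :
      θ 1 * u * ∑ i, α (m + 1) * N (m + 1) (x i) ≤ α (m + 2) * N (m + 2) (∑ i, x i) :=
    calc θ 1 * u * ∑ i, α (m + 1) * N (m + 1) (x i)
        = (u * α (m + 1)) * (θ 1 * ∑ i, N (m + 1) (x i)) := by
          simp only [mul_sum]
          exact sum_congr rfl fun _ _ => by ring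
      _ ≤ α (m + 2) * (θ 1 * ∑ i, N (m + 1) (x i)) :=
          mul_le_mul_of_nonneg_right (hratio (m + 1) (by omega))
            (mul_nonneg (hθ 1).1.le (sum_nonneg fun _ _ => hrec.nonneg _ _))
      _ ≤ α (m + 2) * N (m + 2) (∑ i, x i) :=
          mul_le_mul_of_nonneg_left (hrec.theta_one_mul_sum_le x hne hdisj hmin _) (hα _).le
  calc θ 1 * u * ∑ i, ∑' m, α (m + 1) * N (m + 1) (x i)
      = ∑' m, θ 1 * u * ∑ i, α (m + 1) * N (m + 1) (x i) := by
        rw [tsum_mul_left, Summable.tsum_finsetSum fun i _ => hS (x i)]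
    _ ≤ ∑' m, α (m + 1) * N (m + 1) (∑ i, x i) :=
        Summable.tsum_le_tsum_of_inj (· + 1) (add_left_injective 1)
          (fun _ _ => mul_nonneg (hα _).le (hrec.nonneg _ _)) hterm
          ((summable_sum fun i _ => hS (x i)).mul_left _) (hS _)

/-- `V'` is an asymptotic `ℓ₁` space for vectors with disjoint supports. -/
theorem VPrime_asymptotic_l1
    (θ : ℕ → ℝ) (hθ : ∀ n, θ n ∈ Set.Ioo (0:ℝ) 1)
    (hθ0 : Filter.Tendsto θ Filter.atTop (nhds 0))
    (N : ℕ → (ℕ →₀ ℝ) → ℝ) (hrec : VNormRec θ N)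
    (α : ℕ → ℝ) (hα : ∀ m, 0 < α m)
    (hsum : ∑' m : ℕ, α (m + 1) = 1)
    (u : ℝ) (hu : 0 < u)
    (hratio : ∀ m, 1 ≤ m → u * α m ≤ α (m + 1)) :
    ∀ (n : ℕ) (x : Fin n → (ℕ →₀ ℝ)),
      (∀ i, (x i).support.Nonempty) →
      (∀ i j, i ≠ j → Disjoint (x i).support (x j).support) →
      (∀ i, ∀ j ∈ (x i).support, n ≤ j) →
      θ 1 * u * ∑ i, (∑' m : ℕ, α (m + 1) * N (m + 1) (x i)) ≤
        ∑' m : ℕ, α (m + 1) * N (m + 1) (∑ i, x i) :=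
  VPrime_asymptotic_l1_general θ hθ N hrec α hα hsum u hratio
end

section
/- Let ‖·‖ be a norm on c00 with 1-unconditional basis (e_i), let (v_i) be a normalized block basis (disjoint, consecutively supported, ‖v_i‖ = 1) and suppose the norm has the form ‖x‖ = Σ_{m=1}^∞ α_m ‖x‖_m where each ‖·‖_m is a 1-unconditional norm majorized by ‖·‖ in the sense that the basis is 1-unconditional for each ‖·‖_m. Suppose there exist 1 = p_1 < p_2 < ⋯ such that Σ_{m=p_i}^{p_{i+1}-1} α_m ‖v_i‖_m ≥ 1/2 for all i. Then for all scalars (λ_i) ∈ c00, ‖Σ_i λ_i v_i‖ ≥ (1/2)·Σ_i |λ_i|; that is, (v_i) dominates the unit vector basis of ℓ1 with constant 1/2. -/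
/-!
Disjointness of supports and 1-unconditionality give `|λᵢ| ‖vᵢ‖ₘ ≤ ‖Σₖ λₖ vₖ‖ₘ` for every `m`.
Summing this over the `i`-th window `[pᵢ, pᵢ₊₁)` of indices `m` and using the hypothesis on that
window bounds `|λᵢ| / 2` by the part of the series `Σₘ αₘ ‖x‖ₘ` of `x = Σₖ λₖ vₖ` living there;
the windows are disjoint, so adding over `i` bounds `Σᵢ |λᵢ| / 2` by the whole series.
-/

open Finset Function

theorem Finset.sum_range_sum_Ico_eq_sum_Ico {M : Type*} [AddCommMonoid M] {p : ℕ → ℕ}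
    (hp : Monotone p) (f : ℕ → M) (n : ℕ) :
    ∑ i ∈ range n, ∑ m ∈ Ico (p i) (p (i + 1)), f m = ∑ m ∈ Ico (p 0) (p n), f m := by
  induction n with
  | zero => simp
  | succ n ih =>
    rw [sum_range_succ, ih, sum_Ico_consecutive f (hp n.zero_le) (hp n.le_succ)]

theorem sum_Ico_one_le_tsum_succ {f : ℕ → ℝ} (hf : ∀ m, 0 ≤ f m)
    (hs : Summable fun m => f (m + 1)) (b : ℕ) :
    ∑ m ∈ Ico 1 b, f m ≤ ∑' m, f (m + 1) := by
  rw [sum_Ico_eq_sum_range]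
  simp_rw [add_comm 1]
  exact hs.sum_le_tsum _ fun m _ => hf _

theorem Finsupp.abs_apply_le_abs_sum_apply {ι α : Type*} {f : ι → α →₀ ℝ}
    (hf : Pairwise (Disjoint on fun i => (f i).support)) {s : Finset ι} {i : ι} (hi : i ∈ s)
    (j : α) : |f i j| ≤ |(∑ k ∈ s, f k) j| := by
  by_cases hj : f i j = 0
  · simp [hj]
  have hsum : (∑ k ∈ s, f k) j = f i j := by
    rw [finsetSum_apply, sum_eq_single_of_mem i hi]
    intro k _ hki
    exact notMem_support_iff.mp fun hk =>
      disjoint_left.mp (hf hki) hk (mem_support_iff.mpr hj)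
  rw [hsum]

theorem abs_mul_le_of_pairwise_disjoint_support {ι α : Type*} {N : (α →₀ ℝ) → ℝ}
    (hhom : ∀ (c : ℝ) x, N (c • x) = |c| * N x)
    (hsolid : ∀ x y : α →₀ ℝ, (∀ j, |x j| ≤ |y j|) → N x ≤ N y)
    {v : ι → α →₀ ℝ} (hv : Pairwise (Disjoint on fun i => (v i).support))
    (s : Finset ι) (c : ι → ℝ) {i : ι} (hi : i ∈ s) :
    |c i| * N (v i) ≤ N (∑ k ∈ s, c k • v k) := by
  have hdisj : Pairwise (Disjoint on fun k => (c k • v k).support) := fun k l hkl =>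
    (hv hkl).mono Finsupp.support_smul Finsupp.support_smul
  rw [← hhom]
  exact hsolid _ _ (Finsupp.abs_apply_le_abs_sum_apply hdisj hi)

theorem summable_mul_sum_smul {ι E : Type*} [AddCommGroup E] [Module ℝ E]
    {w : ℕ → ℝ} (hw : ∀ m, 0 ≤ w m) {N : ℕ → E → ℝ}
    (htri : ∀ m x y, N m (x + y) ≤ N m x + N m y)
    (hhom : ∀ m (c : ℝ) x, N m (c • x) = |c| * N m x) (hnonneg : ∀ m x, 0 ≤ N m x)
    (s : Finset ι) (c : ι → ℝ) {v : ι → E} (hv : ∀ i ∈ s, Summable fun m => w m * N m (v i)) :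
    Summable fun m => w m * N m (∑ i ∈ s, c i • v i) := by
  refine Summable.of_nonneg_of_le (fun m => mul_nonneg (hw m) (hnonneg m _)) (fun m => ?_)
    (summable_sum fun i hi => (hv i hi).mul_left |c i|)
  have hzero : N m 0 ≤ 0 := by simpa using (hhom m 0 0).le
  calc w m * N m (∑ i ∈ s, c i • v i)
      ≤ w m * ∑ i ∈ s, N m (c i • v i) :=
        mul_le_mul_of_nonneg_left (le_sum_of_subadditive (N m) hzero (htri m) s _) (hw m)
    _ = ∑ i ∈ s, |c i| * (w m * N m (v i)) := by
        rw [mul_sum]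
        refine sum_congr rfl fun i _ => ?_
        rw [hhom]
        ring

theorem block_basis_dominates_l1_general
    (α : ℕ → ℝ) (hα : ∀ m, 0 < α m)
    (Nm : ℕ → (ℕ →₀ ℝ) → ℝ)
    (htri : ∀ m x y, Nm m (x + y) ≤ Nm m x + Nm m y)
    (hhom : ∀ (m : ℕ) (c : ℝ) (x), Nm m (c • x) = |c| * Nm m x)
    (hnonneg : ∀ m x, 0 ≤ Nm m x)
    (huncond : ∀ (m : ℕ) (x y : ℕ →₀ ℝ), (∀ j, |x j| ≤ |y j|) → Nm m x ≤ Nm m y)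
    (Ntot : (ℕ →₀ ℝ) → ℝ)
    (hNtot : ∀ x, Ntot x = ∑' m : ℕ, α (m + 1) * Nm (m + 1) x)
    (v : ℕ → (ℕ →₀ ℝ))
    (hdisj : ∀ i j, i ≠ j → Disjoint (v i).support (v j).support)
    (hnorm : ∀ i, Ntot (v i) = 1)
    (p : ℕ → ℕ) (hp0 : p 0 = 1) (hpmono : StrictMono p)
    (hhalf : ∀ i, (1:ℝ)/2 ≤ ∑ m ∈ Finset.Ico (p i) (p (i + 1)), α m * Nm m (v i)) :
    ∀ (n : ℕ) (lam : Fin n → ℝ),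
      (1/2 : ℝ) * ∑ i, |lam i| ≤ Ntot (∑ i, lam i • v i) := by
  intro n lam
  set x := ∑ i, lam i • v i
  have hv : Pairwise (Disjoint on fun i : Fin n => (v i).support) := fun i j hij =>
    hdisj i j (Fin.val_injective.ne hij)
  -- a vector with `Ntot = 1 ≠ 0` has a summable series, since non-summable `tsum`s are `0`
  have hsummable_v (i : ℕ) : Summable fun m => α (m + 1) * Nm (m + 1) (v i) := by
    by_contra h
    simpa [hNtot, tsum_eq_zero_of_not_summable h] using hnorm i
  have hsummable_x : Summable fun m => α (m + 1) * Nm (m + 1) x :=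
    summable_mul_sum_smul (fun m => (hα (m + 1)).le) (fun m => htri (m + 1))
      (fun m => hhom (m + 1)) (fun m => hnonneg (m + 1)) univ lam fun i _ => hsummable_v i
  have hwindow (i : Fin n) : 1 / 2 * |lam i| ≤ ∑ m ∈ Ico (p i) (p (i + 1)), α m * Nm m x := by
    calc 1 / 2 * |lam i| ≤ |lam i| * ∑ m ∈ Ico (p i) (p (i + 1)), α m * Nm m (v i) := by
          nlinarith [hhalf i, abs_nonneg (lam i)]
      _ = ∑ m ∈ Ico (p i) (p (i + 1)), α m * (|lam i| * Nm m (v i)) := by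
          simp_rw [mul_sum, mul_left_comm]
      _ ≤ ∑ m ∈ Ico (p i) (p (i + 1)), α m * Nm m x := by
          gcongr with m
          · exact (hα m).le
          · exact abs_mul_le_of_pairwise_disjoint_support (hhom m) (huncond m) hv univ lam
              (mem_univ i)
  rw [hNtot, mul_sum]
  calc ∑ i, 1 / 2 * |lam i|
      ≤ ∑ i : Fin n, ∑ m ∈ Ico (p i) (p (i + 1)), α m * Nm m x := sum_le_sum fun i _ => hwindow i
    _ = ∑ m ∈ Ico 1 (p n), α m * Nm m x := by
        rw [Fin.sum_univ_eq_sum_range (fun i => ∑ m ∈ Ico (p i) (p (i + 1)), α m * Nm m x),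
          sum_range_sum_Ico_eq_sum_Ico hpmono.monotone, hp0]
    _ ≤ ∑' m, α (m + 1) * Nm (m + 1) x :=
        sum_Ico_one_le_tsum_succ (fun m => mul_nonneg (hα m).le (hnonneg m x)) hsummable_x _

theorem block_basis_dominates_l1
    (α : ℕ → ℝ) (hα : ∀ m, 0 < α m)
    (Nm : ℕ → (ℕ →₀ ℝ) → ℝ)
    (htri : ∀ m x y, Nm m (x + y) ≤ Nm m x + Nm m y)
    (hhom : ∀ (m : ℕ) (c : ℝ) (x), Nm m (c • x) = |c| * Nm m x)
    (hnonneg : ∀ m x, 0 ≤ Nm m x)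
    (huncond : ∀ (m : ℕ) (x y : ℕ →₀ ℝ), (∀ j, |x j| ≤ |y j|) → Nm m x ≤ Nm m y)
    (Ntot : (ℕ →₀ ℝ) → ℝ)
    (hNtot : ∀ x, Ntot x = ∑' m : ℕ, α (m + 1) * Nm (m + 1) x)
    (v : ℕ → (ℕ →₀ ℝ))
    (hblock : ∀ i j, i < j → ∀ a ∈ (v i).support, ∀ b ∈ (v j).support, a < b)
    (hdisj : ∀ i j, i ≠ j → Disjoint (v i).support (v j).support)
    (hnorm : ∀ i, Ntot (v i) = 1)
    (p : ℕ → ℕ) (hp0 : p 0 = 1) (hpmono : StrictMono p)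
    (hhalf : ∀ i, (1:ℝ)/2 ≤ ∑ m ∈ Finset.Ico (p i) (p (i + 1)), α m * Nm m (v i)) :
    ∀ (n : ℕ) (lam : Fin n → ℝ),
      (1/2 : ℝ) * ∑ i, |lam i| ≤ Ntot (∑ i, lam i • v i) :=
  block_basis_dominates_l1_general α hα Nm htri hhom hnonneg huncond Ntot hNtot v hdisj hnorm p hp0
    hpmono hhalf
end

section
/- Let ‖·‖_m and ‖·‖_{m+1} be the norms ‖·‖_{V,m} and ‖·‖_{V,m+1} on c00. Suppose (y_i) is a block sequence with ‖y_i‖_{V,m} = 1 for all i and ‖Σ_{i∈F} y_i‖_{V,m} ≤ 2 for all finite F (i.e. (y_i) is 2-equivalent to the c0 basis in ‖·‖_{V,m} from above). Then for every n, choosing k with n ≤ min supp y_{k+1}, one has ‖Σ_{i=k+1}^{k+n} y_i‖_{V,m+1} ≥ θ_1·n while ‖Σ_{i=k+1}^{k+n} y_i‖_{V,m} ≤ 2. Hence ‖·‖_{V,m} and ‖·‖_{V,m+1} are not equivalent on the span of (y_i). -/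
/-! The supports of the `n` blocks `y (k+1), …, y (k+n)` all lie in `[n, ∞)`, so they form an
`S₁`-allowable family; restricting the sum to them recovers the blocks themselves, each of
`‖·‖_{V,m}`-norm one, which gives `θ₁ n` as one of the quantities in the supremum defining
`‖·‖_{V,m+1}`. -/

open Function

lemma Schreier.one_of_card_le {F : Finset ℕ} (h : ∀ a ∈ F, F.card ≤ a) : Schreier 1 F := by
  have hunion : ((F.sort (· ≤ ·)).map ({·})).foldr (· ∪ ·) ∅ = F := by
    have hfoldr : ∀ l : List ℕ, (l.map ({·})).foldr (· ∪ ·) ∅ = l.toFinset := by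
      intro l
      induction l with
      | nil => rfl
      | cons a l ih => simp [ih]
    rw [hfoldr, Finset.sort_toFinset]
  rw [← hunion]
  refine Schreier.union 0 _ ?_ ?_ ?_
  · simp only [List.mem_map]
    rintro _ ⟨a, -, rfl⟩
    exact Schreier.singleton a
  · change List.IsChain _ _
    rw [List.isChain_map]
    refine (List.isChain_iff_pairwise.mpr (Finset.sortedLT_sort F).pairwise).imp ?_
    intro a b hab x hx y hy
    rw [Finset.mem_singleton] at hx hy
    omega
  · simp only [List.mem_map, List.length_map, Finset.length_sort]
    rintro _ ⟨b, hb, rfl⟩ a ha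
    rw [Finset.mem_singleton] at ha
    exact ha ▸ h b ((Finset.mem_sort _).mp hb)

lemma allowableSets_one_of_forall_le {r : ℕ} {E : Fin r → Finset ℕ}
    (hne : ∀ i, (E i).Nonempty) (hdisj : Pairwise (Disjoint on E))
    (hle : ∀ i, ∀ a ∈ E i, r ≤ a) : AllowableSets 1 E := by
  refine ⟨hne, fun i j hij => hdisj hij, Schreier.one_of_card_le ?_⟩
  simp only [Finset.mem_image, Finset.mem_univ, true_and]
  rintro _ ⟨i, rfl⟩
  rw [← Finset.coe_min' (hne i)]
  calc (Finset.univ.image fun i => (E i).min.getD 0).card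
      ≤ (Finset.univ : Finset (Fin r)).card := Finset.card_image_le
    _ = r := Finset.card_fin r
    _ ≤ (E i).min' (hne i) := hle i _ (Finset.min'_mem _ _)

lemma Finsupp.filter_sum_mem_support {ι α M : Type*} [DecidableEq α] [AddCommMonoid M]
    {s : Finset ι} {f : ι → α →₀ M} (hf : (s : Set ι).PairwiseDisjoint fun i => (f i).support)
    {j : ι} (hj : j ∈ s) : (∑ i ∈ s, f i).filter (· ∈ (f j).support) = f j := by
  rw [Finsupp.filter_sum, Finset.sum_eq_single_of_mem j hj, Finsupp.filter_eq_self_iff]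
  · exact fun a ha => Finsupp.mem_support_iff.mpr ha
  · intro i hi hij
    rw [Finsupp.filter_eq_zero_iff]
    intro a ha
    exact Finsupp.notMem_support_iff.mp
      (Finset.disjoint_right.mp (hf hi hj hij) ha)

lemma VNormRec.theta_mul_sum_le {θ : ℕ → ℝ} {N : ℕ → (ℕ →₀ ℝ) → ℝ} (hrec : VNormRec θ N)
    (m : ℕ) (x : ℕ →₀ ℝ) {k r : ℕ} (hk : 1 ≤ k) {E : Fin r → Finset ℕ}
    (hE : AllowableSets k E) : θ k * ∑ i, N m (x.filter (· ∈ E i)) ≤ N (m + 1) x :=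
  (hrec.2 m x).1 (Or.inr ⟨k, hk, r, E, hE, rfl⟩)

section BlockSequence

variable {y : ℕ → ℕ →₀ ℝ}

lemma pairwise_disjoint_support_of_block
    (hblock : ∀ i j, i < j → ∀ a ∈ (y i).support, ∀ b ∈ (y j).support, a < b) :
    Pairwise (Disjoint on fun i => (y i).support) := by
  intro i j hij
  rcases hij.lt_or_gt with h | h
  · exact Finset.disjoint_left.mpr fun a hi hj => (hblock i j h a hi a hj).false
  · exact Finset.disjoint_right.mpr fun a hj hi => (hblock j i h a hj a hi).false

lemma le_of_mem_support_of_block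
    (hblock : ∀ i j, i < j → ∀ a ∈ (y i).support, ∀ b ∈ (y j).support, a < b)
    {i j n : ℕ} (hi : (y i).support.Nonempty) (hn : ∀ a ∈ (y i).support, n ≤ a) (hij : i ≤ j) :
    ∀ a ∈ (y j).support, n ≤ a := by
  rcases hij.eq_or_lt with rfl | hlt
  · exact hn
  · obtain ⟨b, hb⟩ := hi
    exact fun a ha => (hn b hb).trans (hblock i j hlt b hb a ha).le

end BlockSequence

theorem VNorm_succ_not_equivalent_general
    (θ : ℕ → ℝ)
    (N : ℕ → (ℕ →₀ ℝ) → ℝ) (hrec : VNormRec θ N)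
    (m : ℕ) (y : ℕ → (ℕ →₀ ℝ))
    (hsupp : ∀ i, (y i).support.Nonempty)
    (hblock : ∀ i j, i < j → ∀ a ∈ (y i).support, ∀ b ∈ (y j).support, a < b)
    (hnorm1 : ∀ i, N m (y i) = 1)
    (hc0 : ∀ F : Finset ℕ, N m (∑ i ∈ F, y i) ≤ 2) :
    ∀ n k : ℕ, 1 ≤ n → (∀ j ∈ (y (k + 1)).support, n ≤ j) →
      θ 1 * n ≤ N (m + 1) (∑ i ∈ Finset.Ico (k + 1) (k + n + 1), y i) ∧
      N m (∑ i ∈ Finset.Ico (k + 1) (k + n + 1), y i) ≤ 2 := by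
  intro n k _ hk
  refine ⟨?_, hc0 _⟩
  set s := Finset.Ico (k + 1) (k + n + 1)
  have hdisj := pairwise_disjoint_support_of_block hblock
  have hmem (i : Fin n) : k + 1 + i ∈ s := Finset.mem_Ico.mpr ⟨by omega, by omega⟩
  have hE : AllowableSets 1 fun i : Fin n => (y (k + 1 + i)).support :=
    allowableSets_one_of_forall_le (fun i => hsupp _)
      (fun i j hij => hdisj fun h => hij (Fin.ext (by omega)))
      (fun i => le_of_mem_support_of_block hblock (hsupp _) hk (by omega))
  have hpieces (i : Fin n) : N m ((∑ j ∈ s, y j).filter (· ∈ (y (k + 1 + i)).support)) = 1 := by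
    rw [Finsupp.filter_sum_mem_support (hdisj.set_pairwise _) (hmem i), hnorm1]
  calc θ 1 * n
      = θ 1 * ∑ i : Fin n, N m ((∑ j ∈ s, y j).filter (· ∈ (y (k + 1 + i)).support)) := by
        rw [Finset.sum_congr rfl fun i _ => hpieces i, Finset.sum_const, Finset.card_fin,
          nsmul_one]
    _ ≤ N (m + 1) (∑ j ∈ s, y j) := hrec.theta_mul_sum_le m _ le_rfl hE

/-- Consecutive norms `‖·‖_{V,m}` and `‖·‖_{V,m+1}` are not equivalent on the
span of a normalized block sequence that is dominated by the `c₀` basis. -/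
theorem VNorm_succ_not_equivalent
    (θ : ℕ → ℝ) (hθ : ∀ n, θ n ∈ Set.Ioo (0:ℝ) 1)
    (hθ0 : Filter.Tendsto θ Filter.atTop (nhds 0))
    (N : ℕ → (ℕ →₀ ℝ) → ℝ) (hrec : VNormRec θ N)
    (m : ℕ) (y : ℕ → (ℕ →₀ ℝ))
    (hsupp : ∀ i, (y i).support.Nonempty)
    (hblock : ∀ i j, i < j → ∀ a ∈ (y i).support, ∀ b ∈ (y j).support, a < b)
    (hnorm1 : ∀ i, N m (y i) = 1)
    (hc0 : ∀ F : Finset ℕ, N m (∑ i ∈ F, y i) ≤ 2) :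
    ∀ n k : ℕ, 1 ≤ n → (∀ j ∈ (y (k + 1)).support, n ≤ j) →
      θ 1 * n ≤ N (m + 1) (∑ i ∈ Finset.Ico (k + 1) (k + n + 1), y i) ∧
      N m (∑ i ∈ Finset.Ico (k + 1) (k + n + 1), y i) ≤ 2 :=
  VNorm_succ_not_equivalent_general θ N hrec m y hsupp hblock hnorm1 hc0
end
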